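/- arXiv:math/9210207 — 3 statements merged into one kernel-verified Lean document; each statement's English description precedes it below -/
import Mathlib

section
/- If μ is a probability measure on ℝⁿ whose characteristic function has the form x ↦ f(‖x‖) for a norm ‖·‖ on ℝⁿ and an even function f : ℝ → ℝ, then there exists a probability measure ν on ℝ whose characteristic function equals f. -/
open MeasureTheory Complex
open scoped RealInnerProductSpace

/-- The characteristic function of a measure on `ℝⁿ`, `x ↦ ∫ exp(-i⟨x,ξ⟩) dμ(ξ)`. -/
noncomputable def charFunE {n : ℕ} (μ : Measure (EuclideanSpace ℝ (Fin n)))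
    (x : EuclideanSpace ℝ (Fin n)) : ℂ :=
  ∫ ξ, Complex.exp (-(Complex.I) * ((inner ℝ x ξ : ℝ) : ℂ)) ∂μ

/-- The characteristic function of a measure on `ℝ`. -/
noncomputable def charFunR (ν : Measure ℝ) (t : ℝ) : ℂ :=
  ∫ y, Complex.exp (-(Complex.I) * ((t * y : ℝ) : ℂ)) ∂ν

/-! Choose `v` with `|N v| = 1`. The law `ν` of `⟨v, ·⟩` under `μ` satisfies
`charFunR ν t = charFunE μ (t • v) = f (|t| * N v) = f (± t) = f t`, the last step by evenness. -/

theorem exists_abs_eq_one_of_smul {E : Type*} [AddCommGroup E] [Module ℝ E] [Nontrivial E]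
    (N : E → ℝ) (hN0 : ∀ x, N x = 0 → x = 0) (hNsmul : ∀ (a : ℝ) x, N (a • x) = |a| * N x) :
    ∃ x, |N x| = 1 := by
  obtain ⟨e, he⟩ := exists_ne (0 : E)
  have hNe : |N e| ≠ 0 := abs_ne_zero.mpr fun h => he (hN0 e h)
  refine ⟨(N e)⁻¹ • e, ?_⟩
  rw [hNsmul, abs_mul, abs_abs, abs_inv, inv_mul_cancel₀ hNe]

theorem apply_abs_mul_of_even {f : ℝ → ℝ} (hf : ∀ t, f (-t) = f t) {c : ℝ} (hc : |c| = 1)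
    (t : ℝ) : f (|t| * c) = f t := by
  have hf_abs : ∀ s, f |s| = f s := fun s => by
    rcases abs_choice s with h | h <;> rw [h]
    exact hf s
  rw [← hf_abs (|t| * c), abs_mul, abs_abs, hc, mul_one, hf_abs]

theorem charFunR_map_inner {n : ℕ} (μ : Measure (EuclideanSpace ℝ (Fin n)))
    (v : EuclideanSpace ℝ (Fin n)) (t : ℝ) :
    charFunR (μ.map (⟪v, ·⟫)) t = charFunE μ (t • v) := by
  have hmeas : Measurable (⟪v, ·⟫ : EuclideanSpace ℝ (Fin n) → ℝ) :=
    (continuous_const.inner continuous_id).measurable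
  rw [charFunR, integral_map hmeas.aemeasurable (by fun_prop), charFunE]
  simp_rw [real_inner_smul_left]

theorem schoenberg_stmt0_general (n : ℕ) (hn : 0 < n)
    (N : EuclideanSpace ℝ (Fin n) → ℝ)
    (hN0 : ∀ x, N x = 0 ↔ x = 0)
    (hNsmul : ∀ (a : ℝ) x, N (a • x) = |a| * N x)
    (f : ℝ → ℝ) (hf_even : ∀ t, f (-t) = f t)
    (μ : Measure (EuclideanSpace ℝ (Fin n))) [IsProbabilityMeasure μ]
    (hμ : ∀ x, charFunE μ x = (f (N x) : ℂ)) :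
    ∃ ν : Measure ℝ, IsProbabilityMeasure ν ∧ ∀ t : ℝ, charFunR ν t = (f t : ℂ) := by
  have : Nonempty (Fin n) := ⟨⟨0, hn⟩⟩
  obtain ⟨v, hv⟩ := exists_abs_eq_one_of_smul N (fun x => (hN0 x).mp) hNsmul
  refine ⟨μ.map (⟪v, ·⟫), Measure.isProbabilityMeasure_map (by fun_prop), fun t => ?_⟩
  rw [charFunR_map_inner, hμ, hNsmul, apply_abs_mul_of_even hf_even hv]

theorem schoenberg_stmt0 (n : ℕ) (hn : 0 < n)
    (N : EuclideanSpace ℝ (Fin n) → ℝ)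
    (hN0 : ∀ x, N x = 0 ↔ x = 0)
    (hNsmul : ∀ (a : ℝ) x, N (a • x) = |a| * N x)
    (hNadd : ∀ x y, N (x + y) ≤ N x + N y)
    (f : ℝ → ℝ) (hf_even : ∀ t, f (-t) = f t)
    (μ : Measure (EuclideanSpace ℝ (Fin n))) [IsProbabilityMeasure μ]
    (hμ : ∀ x, charFunE μ x = (f (N x) : ℂ)) :
    ∃ ν : Measure ℝ, IsProbabilityMeasure ν ∧ ∀ t : ℝ, charFunR ν t = (f t : ℂ) :=
  schoenberg_stmt0_general n hn N hN0 hNsmul f hf_even μ hμ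
end

section
/- If μ is a probability measure on ℝⁿ whose characteristic function equals f(‖x‖) for some norm ‖·‖ and even function f, then for every nonzero x ∈ ℝⁿ the pushforward of μ under the map ξ ↦ ⟨x,ξ⟩/‖x‖ is the same measure ν on ℝ, independent of the choice of x; moreover the characteristic function of ν equals f. -/
open MeasureTheory Complex

/-! The projection `ξ ↦ ⟨x, ξ⟩ / ‖x‖` has characteristic function `t ↦ μ̂((t / ‖x‖) x)
= f(|t / ‖x‖| ‖x‖) = f(|t|) = f(t)`, which does not depend on `x`; since a finite measure on `ℝ`
is determined by its characteristic function, all these projections are one measure `ν`. -/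

lemma charFunR_eq_charFun (ν : Measure ℝ) (t : ℝ) : charFunR ν t = charFun ν (-t) := by
  simp only [charFunR, charFun_apply_real]
  congr 1 with y
  push_cast
  ring_nf

lemma Measure.ext_of_charFunR {ν₁ ν₂ : Measure ℝ} [IsFiniteMeasure ν₁] [IsFiniteMeasure ν₂]
    (h : ∀ t, charFunR ν₁ t = charFunR ν₂ t) : ν₁ = ν₂ :=
  Measure.ext_of_charFun <| funext fun t => by simpa [charFunR_eq_charFun] using h (-t)

lemma charFunR_map_inner_div {n : ℕ} (μ : Measure (EuclideanSpace ℝ (Fin n)))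
    (x : EuclideanSpace ℝ (Fin n)) (c t : ℝ) :
    charFunR (μ.map fun ξ => inner ℝ x ξ / c) t = charFunE μ ((t / c) • x) := by
  rw [charFunR, integral_map (by fun_prop) (by fun_prop), charFunE]
  simp only [real_inner_smul_left, mul_div_assoc', div_mul_eq_mul_div]

lemma Function.Even.apply_abs {f : ℝ → ℝ} (hf : Function.Even f) (s : ℝ) : f |s| = f s := by
  rcases abs_choice s with h | h <;> simp [h, hf s]

lemma Function.Even.apply_abs_div_mul {f : ℝ → ℝ} (hf : Function.Even f) {c : ℝ} (hc : c ≠ 0)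
    (t : ℝ) : f (|t / c| * c) = f t := by
  rw [← hf.apply_abs, abs_mul, abs_abs, abs_div, div_mul_cancel₀ _ (abs_ne_zero.2 hc),
    hf.apply_abs]

theorem schoenberg_stmt1_general (n : ℕ) (hn : 0 < n)
    (N : EuclideanSpace ℝ (Fin n) → ℝ)
    (hN0 : ∀ x, N x = 0 ↔ x = 0)
    (hNsmul : ∀ (a : ℝ) x, N (a • x) = |a| * N x)
    (f : ℝ → ℝ) (hf_even : ∀ t, f (-t) = f t)
    (μ : Measure (EuclideanSpace ℝ (Fin n))) [IsProbabilityMeasure μ]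
    (hμ : ∀ x, charFunE μ x = (f (N x) : ℂ)) :
    ∃ ν : Measure ℝ, IsProbabilityMeasure ν ∧
      (∀ x : EuclideanSpace ℝ (Fin n), x ≠ 0 →
        Measure.map (fun ξ => (inner ℝ x ξ : ℝ) / N x) μ = ν) ∧
      (∀ t : ℝ, charFunR ν t = (f t : ℂ)) := by
  have hproj : ∀ x, x ≠ 0 → ∀ t,
      charFunR (μ.map fun ξ => inner ℝ x ξ / N x) t = f t := fun x hx t => by
    rw [charFunR_map_inner_div, hμ, hNsmul,
      Function.Even.apply_abs_div_mul hf_even (mt (hN0 x).1 hx)]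
  have : Nonempty (Fin n) := ⟨⟨0, hn⟩⟩
  obtain ⟨x₀, hx₀⟩ := exists_ne (0 : EuclideanSpace ℝ (Fin n))
  refine ⟨_, Measure.isProbabilityMeasure_map (by fun_prop), fun x hx => ?_, hproj x₀ hx₀⟩
  have : IsProbabilityMeasure (μ.map fun ξ => inner ℝ x ξ / N x) :=
    Measure.isProbabilityMeasure_map (by fun_prop)
  have : IsProbabilityMeasure (μ.map fun ξ => inner ℝ x₀ ξ / N x₀) :=
    Measure.isProbabilityMeasure_map (by fun_prop)
  exact Measure.ext_of_charFunR fun t => by rw [hproj x hx, hproj x₀ hx₀]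

theorem schoenberg_stmt1 (n : ℕ) (hn : 0 < n)
    (N : EuclideanSpace ℝ (Fin n) → ℝ)
    (hN0 : ∀ x, N x = 0 ↔ x = 0)
    (hNsmul : ∀ (a : ℝ) x, N (a • x) = |a| * N x)
    (hNadd : ∀ x y, N (x + y) ≤ N x + N y)
    (f : ℝ → ℝ) (hf_even : ∀ t, f (-t) = f t)
    (μ : Measure (EuclideanSpace ℝ (Fin n))) [IsProbabilityMeasure μ]
    (hμ : ∀ x, charFunE μ x = (f (N x) : ℂ)) :
    ∃ ν : Measure ℝ, IsProbabilityMeasure ν ∧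
      (∀ x : EuclideanSpace ℝ (Fin n), x ≠ 0 →
        Measure.map (fun ξ => (inner ℝ x ξ : ℝ) / N x) μ = ν) ∧
      (∀ t : ℝ, charFunR ν t = (f t : ℂ)) :=
  schoenberg_stmt1_general n hn N hN0 hNsmul f hf_even μ hμ
end

section
/- For every x ∈ ℝⁿ and β ∈ (-1,2)∖{0}, if μ is a probability measure on ℝⁿ with characteristic function f(‖x‖) and ν is its common one-dimensional projection, then ∫_{ℝⁿ} |⟨x,ξ⟩|^β dμ(ξ) = ‖x‖^β · ∫_ℝ |t|^β dν(t) (where both sides may be infinite). -/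
open MeasureTheory Complex

lemma pos_of_ne_zero_of_add_le_of_abs_smul {E : Type*} [AddCommGroup E] [Module ℝ E]
    {N : E → ℝ} (hN0 : ∀ x, N x = 0 → x = 0) (hNsmul : ∀ (a : ℝ) x, N (a • x) = |a| * N x)
    (hNadd : ∀ x y, N (x + y) ≤ N x + N y) {x : E} (hx : x ≠ 0) : 0 < N x :=
  (apply_nonneg (Seminorm.of N hNadd hNsmul) x).lt_of_ne' (mt (hN0 x) hx)

lemma lintegral_ofReal_abs_rpow_eq_mul_map_div {α : Type*} [MeasurableSpace α] (μ : Measure α)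
    {g : α → ℝ} (hg : AEMeasurable g μ) {c : ℝ} (hc : 0 < c) (β : ℝ) :
    ∫⁻ a, ENNReal.ofReal (|g a| ^ β) ∂μ =
      ENNReal.ofReal (c ^ β) * ∫⁻ t, ENNReal.ofReal (|t| ^ β) ∂(μ.map fun a => g a / c) := by
  have hmeas : Measurable fun t : ℝ => ENNReal.ofReal (|t| ^ β) :=
    (measurable_id.abs.pow_const β).ennreal_ofReal
  rw [lintegral_map' hmeas.aemeasurable (hg.div_const c),
    ← lintegral_const_mul' _ _ ENNReal.ofReal_ne_top]
  refine lintegral_congr fun a => ?_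
  rw [← ENNReal.ofReal_mul (by positivity), abs_div, abs_of_pos hc,
    ← Real.mul_rpow hc.le (by positivity), mul_div_cancel₀ _ hc.ne']

theorem schoenberg_stmt6_general (n : ℕ)
    (N : EuclideanSpace ℝ (Fin n) → ℝ)
    (hN0 : ∀ x, N x = 0 ↔ x = 0)
    (hNsmul : ∀ (a : ℝ) x, N (a • x) = |a| * N x)
    (hNadd : ∀ x y, N (x + y) ≤ N x + N y)
    (μ : Measure (EuclideanSpace ℝ (Fin n)))
    (ν : Measure ℝ)
    (hν : ∀ x : EuclideanSpace ℝ (Fin n), x ≠ 0 →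
      Measure.map (fun ξ => (inner ℝ x ξ : ℝ) / N x) μ = ν)
    (β : ℝ) (hβne : β ≠ 0)
    (x : EuclideanSpace ℝ (Fin n)) :
    ∫⁻ ξ, ENNReal.ofReal (|(inner ℝ x ξ : ℝ)| ^ β) ∂μ =
      ENNReal.ofReal (N x ^ β) * ∫⁻ t, ENNReal.ofReal (|t| ^ β) ∂ν := by
  rcases eq_or_ne x 0 with rfl | hx
  · simp [(hN0 0).mpr rfl, Real.zero_rpow hβne]
  · rw [← hν x hx]
    exact lintegral_ofReal_abs_rpow_eq_mul_map_div μ (by fun_prop)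
      (pos_of_ne_zero_of_add_le_of_abs_smul (fun y => (hN0 y).mp) hNsmul hNadd hx) β

theorem schoenberg_stmt6 (n : ℕ) (hn : 0 < n)
    (N : EuclideanSpace ℝ (Fin n) → ℝ)
    (hN0 : ∀ x, N x = 0 ↔ x = 0)
    (hNsmul : ∀ (a : ℝ) x, N (a • x) = |a| * N x)
    (hNadd : ∀ x y, N (x + y) ≤ N x + N y)
    (f : ℝ → ℝ) (hf_even : ∀ t, f (-t) = f t)
    (μ : Measure (EuclideanSpace ℝ (Fin n))) [IsProbabilityMeasure μ]
    (hμ : ∀ x, charFunE μ x = (f (N x) : ℂ))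
    (ν : Measure ℝ)
    (hν : ∀ x : EuclideanSpace ℝ (Fin n), x ≠ 0 →
      Measure.map (fun ξ => (inner ℝ x ξ : ℝ) / N x) μ = ν)
    (β : ℝ) (hβ0 : -1 < β) (hβ2 : β < 2) (hβne : β ≠ 0)
    (x : EuclideanSpace ℝ (Fin n)) :
    ∫⁻ ξ, ENNReal.ofReal (|(inner ℝ x ξ : ℝ)| ^ β) ∂μ =
      ENNReal.ofReal (N x ^ β) * ∫⁻ t, ENNReal.ofReal (|t| ^ β) ∂ν :=
  schoenberg_stmt6_general n N hN0 hNsmul hNadd μ ν hν β hβne x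
end
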